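/- The polygonal chain with vertices (4,4), (4,0), (0,0), (0,8), (4,0), (−1,5), (7,1), (0,1), (3,4) is a covering trail for the grid G_5^2 with exactly 8 edges. -/

import Mathlib

noncomputable section

/-- Points of the Euclidean plane. -/
abbrev Pt : Type := EuclideanSpace ℝ (Fin 2)

/-- The point `(x, y)` of the plane. -/
def pt (x y : ℝ) : Pt := WithLp.toLp 2 ![x, y]

/-- The grid `G_n^2 = {0, 1, …, n-1} × {0, 1, …, n-1}` as a subset of the plane. -/
def grid (n : ℕ) : Set Pt :=
  {p | ∃ a b : ℕ, a < n ∧ b < n ∧ p = pt a b}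

/-- The parametrization `γ : [0, k] → ℝ²` of the polygonal chain with vertices
`v 0, v 1, …, v k`:  for `t ∈ [i, i+1]`, `γ t = (i+1-t) • v i + (t-i) • v (i+1)`. -/
def chainParam (v : ℕ → Pt) (t : ℝ) : Pt :=
  (1 - (t - (⌊t⌋₊ : ℝ))) • v ⌊t⌋₊ + (t - (⌊t⌋₊ : ℝ)) • v (⌊t⌋₊ + 1)

/-- `v 0, v 1, …, v k` are the vertices of a polygonal chain with `k` edges:
consecutive vertices are distinct, the `k` edges (as segments) are pairwise
distinct, and no two consecutive edges are collinear (`v (i+2)` never lies on the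
line through `v i` and `v (i+1)`). -/
def IsPolyChain (k : ℕ) (v : ℕ → Pt) : Prop :=
  (∀ i < k, v i ≠ v (i + 1)) ∧
  (∀ i < k, ∀ j < k, i ≠ j →
      segment ℝ (v i) (v (i + 1)) ≠ segment ℝ (v j) (v (j + 1))) ∧
  (∀ i, i + 2 ≤ k → v (i + 2) ∉ affineSpan ℝ {v i, v (i + 1)})

/-- A covering trail for `G_n^2` with `k` edges: a polygonal chain such that every
grid point equals `γ t` for at least one `t ∈ [0, k]`. -/
def IsCoveringTrail (n k : ℕ) (v : ℕ → Pt) : Prop :=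
  IsPolyChain k v ∧
  ∀ p ∈ grid n, ∃ t ∈ Set.Icc (0 : ℝ) (k : ℝ), chainParam v t = p

/-- A covering path for `G_n^2` with `k` edges: a covering trail such that every
grid point equals `γ t` for exactly one `t ∈ [0, k]`. -/
def IsCoveringPath (n k : ℕ) (v : ℕ → Pt) : Prop :=
  IsCoveringTrail n k v ∧
  ∀ p ∈ grid n, ∃! t, t ∈ Set.Icc (0 : ℝ) (k : ℝ) ∧ chainParam v t = p

/-- A covering circuit for `G_n^2` with `k` edges: a covering trail that is closed
(`v 0 = v k`) and whose last and first edges are also non-collinear. -/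
def IsCoveringCircuit (n k : ℕ) (v : ℕ → Pt) : Prop :=
  IsCoveringTrail n k v ∧ v 0 = v k ∧
  v 1 ∉ affineSpan ℝ {v (k - 1), v k}

/-- A covering cycle for `G_n^2` with `k` edges: a covering circuit such that every
grid point equals `γ t` for exactly one `t ∈ [0, k)`. -/
def IsCoveringCycle (n k : ℕ) (v : ℕ → Pt) : Prop :=
  IsCoveringCircuit n k v ∧
  ∀ p ∈ grid n, ∃! t, t ∈ Set.Ico (0 : ℝ) (k : ℝ) ∧ chainParam v t = p

/-- The total (Euclidean) length of the polygonal chain with vertices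
`v 0, v 1, …, v k`. -/
def chainLength (k : ℕ) (v : ℕ → Pt) : ℝ :=
  ∑ i ∈ Finset.range k, dist (v i) (v (i + 1))

lemma pt0 (x y : ℝ) : pt x y 0 = x := rfl
lemma pt1 (x y : ℝ) : pt x y 1 = y := rfl

lemma pt_ext (p q : Pt) (h0 : p 0 = q 0) (h1 : p 1 = q 1) : p = q := by
  ext i; fin_cases i <;> assumption

lemma seg_mem_line (a b p : Pt) (α β γ : ℝ)
    (ha : α * a 0 + β * a 1 = γ) (hb : α * b 0 + β * b 1 = γ)
    (hp : p ∈ segment ℝ a b) : α * p 0 + β * p 1 = γ := by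
  obtain ⟨u, w, hu, hw, huw, he⟩ := hp
  have e0 := congrArg (fun x : Pt => x 0) he
  have e1 := congrArg (fun x : Pt => x 1) he
  simp only [PiLp.add_apply, PiLp.smul_apply, smul_eq_mul] at e0 e1
  linear_combination u * ha + w * hb - α * e0 - β * e1 + γ * huw

lemma seg_ne (a b c d : Pt) (α β γ : ℝ)
    (ha : α * a 0 + β * a 1 = γ) (hb : α * b 0 + β * b 1 = γ)
    (hcd : ¬(α * c 0 + β * c 1 = γ ∧ α * d 0 + β * d 1 = γ)) :
    segment ℝ a b ≠ segment ℝ c d := by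
  intro h
  exact hcd ⟨seg_mem_line a b c α β γ ha hb (h ▸ left_mem_segment ℝ c d),
    seg_mem_line a b d α β γ ha hb (h ▸ right_mem_segment ℝ c d)⟩

lemma not_mem_line (a b p : Pt)
    (h : ∀ r : ℝ, ¬ (r * (b 0 - a 0) + a 0 = p 0 ∧ r * (b 1 - a 1) + a 1 = p 1)) :
    p ∉ affineSpan ℝ {a, b} := by
  intro hp
  have hd := AffineSubspace.vsub_mem_direction hp (left_mem_affineSpan_pair ℝ a b)
  rw [direction_affineSpan, mem_vectorSpan_pair_rev] at hd
  obtain ⟨r, hr⟩ := hd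
  apply h r
  have e0 := congrArg (fun x : Pt => x 0) hr
  have e1 := congrArg (fun x : Pt => x 1) hr
  simp only [PiLp.smul_apply, PiLp.sub_apply, smul_eq_mul, vsub_eq_sub] at e0 e1
  constructor <;> linarith

lemma cover_aux (v : ℕ → Pt) (i : ℕ) (s : ℝ) (h0 : 0 ≤ s) (h1 : s < 1)
    (k : ℕ) (hik : (i : ℝ) + s ≤ k) (p : Pt)
    (hx : (1 - s) * v i 0 + s * v (i + 1) 0 = p 0)
    (hy : (1 - s) * v i 1 + s * v (i + 1) 1 = p 1) :
    ∃ t ∈ Set.Icc (0 : ℝ) (k : ℝ), chainParam v t = p := by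
  refine ⟨(i : ℝ) + s, ⟨by positivity, hik⟩, ?_⟩
  have hf : ⌊(i : ℝ) + s⌋₊ = i := by
    rw [Nat.floor_eq_iff (by positivity)]
    constructor <;> linarith
  unfold chainParam
  rw [hf]
  have h2 : ((i : ℝ) + s) - (i : ℝ) = s := by ring
  rw [h2]
  apply pt_ext <;>
    simp only [PiLp.add_apply, PiLp.smul_apply, smul_eq_mul] <;> assumption

set_option linter.unusedTactic false in
/-- The polygonal chain with vertices
`(4,4), (4,0), (0,0), (0,8), (4,0), (-1,5), (7,1), (0,1), (3,4)` is a covering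
trail for `G_5^2` with exactly `8` edges. -/
theorem stmt16 :
    IsCoveringTrail 5 8
      (fun i => [pt 4 4, pt 4 0, pt 0 0, pt 0 8, pt 4 0, pt (-1) 5, pt 7 1,
        pt 0 1, pt 3 4].getD i (pt 0 0)) := by
  set V : ℕ → Pt := fun i => [pt 4 4, pt 4 0, pt 0 0, pt 0 8, pt 4 0, pt (-1) 5, pt 7 1,
        pt 0 1, pt 3 4].getD i (pt 0 0) with hV
  have hV0 : V 0 = pt 4 4 := rfl
  have hV1 : V 1 = pt 4 0 := rfl
  have hV2 : V 2 = pt 0 0 := rfl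
  have hV3 : V 3 = pt 0 8 := rfl
  have hV4 : V 4 = pt 4 0 := rfl
  have hV5 : V 5 = pt (-1) 5 := rfl
  have hV6 : V 6 = pt 7 1 := rfl
  have hV7 : V 7 = pt 0 1 := rfl
  have hV8 : V 8 = pt 3 4 := rfl
  have hV9 : V 9 = pt 0 0 := rfl
  refine ⟨⟨?_, ?_, ?_⟩, ?_⟩
  · -- consecutive vertices distinct
    intro i hi
    interval_cases i <;>
      (intro h; have h0 := congrArg (fun x : Pt => x 0) h; have h1 := congrArg (fun x : Pt => x 1) h;
       norm_num [hV0,hV1,hV2,hV3,hV4,hV5,hV6,hV7,hV8,hV9, pt0, pt1] at h0 <;> norm_num [hV0,hV1,hV2,hV3,hV4,hV5,hV6,hV7,hV8,hV9, pt0, pt1] at h1)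
  · -- segments pairwise distinct
    intro i hi j hj hij
    interval_cases i <;> interval_cases j <;>
      first
      | exact absurd rfl hij
      | ((apply seg_ne _ _ _ _ 1 0 4 <;> norm_num [hV0,hV1,hV2,hV3,hV4,hV5,hV6,hV7,hV8,hV9, pt0, pt1]); done)
      | ((apply seg_ne _ _ _ _ 0 1 0 <;> norm_num [hV0,hV1,hV2,hV3,hV4,hV5,hV6,hV7,hV8,hV9, pt0, pt1]); done)
      | ((apply seg_ne _ _ _ _ 1 0 0 <;> norm_num [hV0,hV1,hV2,hV3,hV4,hV5,hV6,hV7,hV8,hV9, pt0, pt1]); done)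
      | ((apply seg_ne _ _ _ _ 2 1 8 <;> norm_num [hV0,hV1,hV2,hV3,hV4,hV5,hV6,hV7,hV8,hV9, pt0, pt1]); done)
      | ((apply seg_ne _ _ _ _ 1 1 4 <;> norm_num [hV0,hV1,hV2,hV3,hV4,hV5,hV6,hV7,hV8,hV9, pt0, pt1]); done)
      | ((apply seg_ne _ _ _ _ 1 2 9 <;> norm_num [hV0,hV1,hV2,hV3,hV4,hV5,hV6,hV7,hV8,hV9, pt0, pt1]); done)
      | ((apply seg_ne _ _ _ _ 0 1 1 <;> norm_num [hV0,hV1,hV2,hV3,hV4,hV5,hV6,hV7,hV8,hV9, pt0, pt1]); done)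
      | ((apply seg_ne _ _ _ _ 1 (-1) (-1) <;> norm_num [hV0,hV1,hV2,hV3,hV4,hV5,hV6,hV7,hV8,hV9, pt0, pt1]); done)
  · -- non-collinearity
    intro i hi
    have hi' : i ≤ 6 := by omega
    interval_cases i <;>
      (refine not_mem_line _ _ _ fun r => ?_;
       rintro ⟨e1, e2⟩;
       norm_num [hV0,hV1,hV2,hV3,hV4,hV5,hV6,hV7,hV8,hV9, pt0, pt1] at e1 <;> norm_num [hV0,hV1,hV2,hV3,hV4,hV5,hV6,hV7,hV8,hV9, pt0, pt1] at e2 <;> linarith)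
  · -- coverage
    rintro p ⟨a, b, ha, hb, rfl⟩
    interval_cases a <;> interval_cases b
    · exact cover_aux V 2 0 (by norm_num) (by norm_num) 8 (by norm_num) _ (by norm_num [hV0,hV1,hV2,hV3,hV4,hV5,hV6,hV7,hV8,hV9, pt0, pt1]) (by norm_num [hV0,hV1,hV2,hV3,hV4,hV5,hV6,hV7,hV8,hV9, pt0, pt1])
    · exact cover_aux V 2 (1/8) (by norm_num) (by norm_num) 8 (by norm_num) _ (by norm_num [hV0,hV1,hV2,hV3,hV4,hV5,hV6,hV7,hV8,hV9, pt0, pt1]) (by norm_num [hV0,hV1,hV2,hV3,hV4,hV5,hV6,hV7,hV8,hV9, pt0, pt1])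
    · exact cover_aux V 2 (1/4) (by norm_num) (by norm_num) 8 (by norm_num) _ (by norm_num [hV0,hV1,hV2,hV3,hV4,hV5,hV6,hV7,hV8,hV9, pt0, pt1]) (by norm_num [hV0,hV1,hV2,hV3,hV4,hV5,hV6,hV7,hV8,hV9, pt0, pt1])
    · exact cover_aux V 2 (3/8) (by norm_num) (by norm_num) 8 (by norm_num) _ (by norm_num [hV0,hV1,hV2,hV3,hV4,hV5,hV6,hV7,hV8,hV9, pt0, pt1]) (by norm_num [hV0,hV1,hV2,hV3,hV4,hV5,hV6,hV7,hV8,hV9, pt0, pt1])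
    · exact cover_aux V 2 (1/2) (by norm_num) (by norm_num) 8 (by norm_num) _ (by norm_num [hV0,hV1,hV2,hV3,hV4,hV5,hV6,hV7,hV8,hV9, pt0, pt1]) (by norm_num [hV0,hV1,hV2,hV3,hV4,hV5,hV6,hV7,hV8,hV9, pt0, pt1])
    · exact cover_aux V 1 (3/4) (by norm_num) (by norm_num) 8 (by norm_num) _ (by norm_num [hV0,hV1,hV2,hV3,hV4,hV5,hV6,hV7,hV8,hV9, pt0, pt1]) (by norm_num [hV0,hV1,hV2,hV3,hV4,hV5,hV6,hV7,hV8,hV9, pt0, pt1])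
    · exact cover_aux V 6 (6/7) (by norm_num) (by norm_num) 8 (by norm_num) _ (by norm_num [hV0,hV1,hV2,hV3,hV4,hV5,hV6,hV7,hV8,hV9, pt0, pt1]) (by norm_num [hV0,hV1,hV2,hV3,hV4,hV5,hV6,hV7,hV8,hV9, pt0, pt1])
    · exact cover_aux V 7 (1/3) (by norm_num) (by norm_num) 8 (by norm_num) _ (by norm_num [hV0,hV1,hV2,hV3,hV4,hV5,hV6,hV7,hV8,hV9, pt0, pt1]) (by norm_num [hV0,hV1,hV2,hV3,hV4,hV5,hV6,hV7,hV8,hV9, pt0, pt1])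
    · exact cover_aux V 4 (3/5) (by norm_num) (by norm_num) 8 (by norm_num) _ (by norm_num [hV0,hV1,hV2,hV3,hV4,hV5,hV6,hV7,hV8,hV9, pt0, pt1]) (by norm_num [hV0,hV1,hV2,hV3,hV4,hV5,hV6,hV7,hV8,hV9, pt0, pt1])
    · exact cover_aux V 5 (1/4) (by norm_num) (by norm_num) 8 (by norm_num) _ (by norm_num [hV0,hV1,hV2,hV3,hV4,hV5,hV6,hV7,hV8,hV9, pt0, pt1]) (by norm_num [hV0,hV1,hV2,hV3,hV4,hV5,hV6,hV7,hV8,hV9, pt0, pt1])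
    · exact cover_aux V 1 (1/2) (by norm_num) (by norm_num) 8 (by norm_num) _ (by norm_num [hV0,hV1,hV2,hV3,hV4,hV5,hV6,hV7,hV8,hV9, pt0, pt1]) (by norm_num [hV0,hV1,hV2,hV3,hV4,hV5,hV6,hV7,hV8,hV9, pt0, pt1])
    · exact cover_aux V 6 (5/7) (by norm_num) (by norm_num) 8 (by norm_num) _ (by norm_num [hV0,hV1,hV2,hV3,hV4,hV5,hV6,hV7,hV8,hV9, pt0, pt1]) (by norm_num [hV0,hV1,hV2,hV3,hV4,hV5,hV6,hV7,hV8,hV9, pt0, pt1])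
    · exact cover_aux V 4 (2/5) (by norm_num) (by norm_num) 8 (by norm_num) _ (by norm_num [hV0,hV1,hV2,hV3,hV4,hV5,hV6,hV7,hV8,hV9, pt0, pt1]) (by norm_num [hV0,hV1,hV2,hV3,hV4,hV5,hV6,hV7,hV8,hV9, pt0, pt1])
    · exact cover_aux V 7 (2/3) (by norm_num) (by norm_num) 8 (by norm_num) _ (by norm_num [hV0,hV1,hV2,hV3,hV4,hV5,hV6,hV7,hV8,hV9, pt0, pt1]) (by norm_num [hV0,hV1,hV2,hV3,hV4,hV5,hV6,hV7,hV8,hV9, pt0, pt1])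
    · exact cover_aux V 3 (1/2) (by norm_num) (by norm_num) 8 (by norm_num) _ (by norm_num [hV0,hV1,hV2,hV3,hV4,hV5,hV6,hV7,hV8,hV9, pt0, pt1]) (by norm_num [hV0,hV1,hV2,hV3,hV4,hV5,hV6,hV7,hV8,hV9, pt0, pt1])
    · exact cover_aux V 1 (1/4) (by norm_num) (by norm_num) 8 (by norm_num) _ (by norm_num [hV0,hV1,hV2,hV3,hV4,hV5,hV6,hV7,hV8,hV9, pt0, pt1]) (by norm_num [hV0,hV1,hV2,hV3,hV4,hV5,hV6,hV7,hV8,hV9, pt0, pt1])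
    · exact cover_aux V 4 (1/5) (by norm_num) (by norm_num) 8 (by norm_num) _ (by norm_num [hV0,hV1,hV2,hV3,hV4,hV5,hV6,hV7,hV8,hV9, pt0, pt1]) (by norm_num [hV0,hV1,hV2,hV3,hV4,hV5,hV6,hV7,hV8,hV9, pt0, pt1])
    · exact cover_aux V 3 (3/4) (by norm_num) (by norm_num) 8 (by norm_num) _ (by norm_num [hV0,hV1,hV2,hV3,hV4,hV5,hV6,hV7,hV8,hV9, pt0, pt1]) (by norm_num [hV0,hV1,hV2,hV3,hV4,hV5,hV6,hV7,hV8,hV9, pt0, pt1])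
    · exact cover_aux V 5 (1/2) (by norm_num) (by norm_num) 8 (by norm_num) _ (by norm_num [hV0,hV1,hV2,hV3,hV4,hV5,hV6,hV7,hV8,hV9, pt0, pt1]) (by norm_num [hV0,hV1,hV2,hV3,hV4,hV5,hV6,hV7,hV8,hV9, pt0, pt1])
    · exact cover_aux V 8 0 (by norm_num) (by norm_num) 8 (by norm_num) _ (by norm_num [hV0,hV1,hV2,hV3,hV4,hV5,hV6,hV7,hV8,hV9, pt0, pt1]) (by norm_num [hV0,hV1,hV2,hV3,hV4,hV5,hV6,hV7,hV8,hV9, pt0, pt1])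
    · exact cover_aux V 1 0 (by norm_num) (by norm_num) 8 (by norm_num) _ (by norm_num [hV0,hV1,hV2,hV3,hV4,hV5,hV6,hV7,hV8,hV9, pt0, pt1]) (by norm_num [hV0,hV1,hV2,hV3,hV4,hV5,hV6,hV7,hV8,hV9, pt0, pt1])
    · exact cover_aux V 0 (3/4) (by norm_num) (by norm_num) 8 (by norm_num) _ (by norm_num [hV0,hV1,hV2,hV3,hV4,hV5,hV6,hV7,hV8,hV9, pt0, pt1]) (by norm_num [hV0,hV1,hV2,hV3,hV4,hV5,hV6,hV7,hV8,hV9, pt0, pt1])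
    · exact cover_aux V 0 (1/2) (by norm_num) (by norm_num) 8 (by norm_num) _ (by norm_num [hV0,hV1,hV2,hV3,hV4,hV5,hV6,hV7,hV8,hV9, pt0, pt1]) (by norm_num [hV0,hV1,hV2,hV3,hV4,hV5,hV6,hV7,hV8,hV9, pt0, pt1])
    · exact cover_aux V 0 (1/4) (by norm_num) (by norm_num) 8 (by norm_num) _ (by norm_num [hV0,hV1,hV2,hV3,hV4,hV5,hV6,hV7,hV8,hV9, pt0, pt1]) (by norm_num [hV0,hV1,hV2,hV3,hV4,hV5,hV6,hV7,hV8,hV9, pt0, pt1])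
    · exact cover_aux V 0 0 (by norm_num) (by norm_num) 8 (by norm_num) _ (by norm_num [hV0,hV1,hV2,hV3,hV4,hV5,hV6,hV7,hV8,hV9, pt0, pt1]) (by norm_num [hV0,hV1,hV2,hV3,hV4,hV5,hV6,hV7,hV8,hV9, pt0, pt1])
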